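/- arXiv:0705.3386 — 2 statements merged into one kernel-verified Lean document; each statement's English description precedes it below -/
import Mathlib

section
/- Let X be a metric space, f : X → X an isometry, d ≥ 0, and suppose there exists a point p ∈ X with dist(p, f^n(p)) = n·d for every natural number n. Then dist(x, f(x)) ≥ d for every x ∈ X. -/
/-! Along the orbit of `p` the isometry moves points by exactly `n * d` in `n` steps. Any other
point `x` stays within `dist p x` of `p` along the orbit, so `f^[n]` moves it by at least
`n * d - 2 * dist p x`, while the triangle inequality bounds that by `n * dist x (f x)`.
Letting `n → ∞` gives `d ≤ dist x (f x)`. -/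

theorem le_of_forall_natCast_mul_le_add {α : Type*} [Ring α] [LinearOrder α]
    [IsStrictOrderedRing α] [Archimedean α] {a b c : α} (h : ∀ n : ℕ, n * a ≤ n * b + c) :
    a ≤ b := by
  by_contra! hlt
  obtain ⟨n, hn⟩ := Archimedean.arch (c + 1) (sub_pos.2 hlt)
  rw [nsmul_eq_mul, mul_sub] at hn
  have hc : c + 1 + n * b ≤ c + n * b :=
    (le_sub_iff_add_le.1 hn).trans ((h n).trans_eq (add_comm _ _))
  exact (lt_add_one c).not_ge (le_of_add_le_add_right hc)

namespace LipschitzWith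

variable {α : Type*} [PseudoMetricSpace α]

theorem dist_iterate_le_mul {f : α → α} (hf : LipschitzWith 1 f) (x : α) (n : ℕ) :
    dist x (f^[n] x) ≤ n * dist x (f x) := by
  induction n with
  | zero => simp
  | succ n ih =>
    calc dist x (f^[n + 1] x) ≤ dist x (f x) + dist (f x) (f (f^[n] x)) := by
          rw [Function.iterate_succ_apply']; exact dist_triangle _ _ _
      _ ≤ dist x (f x) + dist x (f^[n] x) := by gcongr; simpa using hf.dist_le_mul x (f^[n] x)
      _ ≤ (n + 1 : ℕ) * dist x (f x) := by push_cast; linarith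

theorem dist_self_apply_le_add_two_mul_dist {g : α → α} (hg : LipschitzWith 1 g) (p x : α) :
    dist p (g p) ≤ dist x (g x) + 2 * dist p x := by
  have hgxp : dist (g x) (g p) ≤ dist x p := by simpa using hg.dist_le_mul x p
  linarith [dist_triangle4 p x (g x) (g p), dist_comm x p]

end LipschitzWith

theorem stmt_1_general {X : Type*} [MetricSpace X] (f : X → X) (hf : Isometry f)
    (d : ℝ) (p : X) (hp : ∀ n : ℕ, dist p (f^[n] p) = n * d) :
    ∀ x : X, d ≤ dist x (f x) := by
  intro x
  refine le_of_forall_natCast_mul_le_add (c := 2 * dist p x) fun n => ?_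
  have hfn : LipschitzWith 1 f^[n] := by simpa using hf.lipschitz.iterate n
  calc n * d = dist p (f^[n] p) := (hp n).symm
    _ ≤ dist x (f^[n] x) + 2 * dist p x := hfn.dist_self_apply_le_add_two_mul_dist p x
    _ ≤ n * dist x (f x) + 2 * dist p x := by
      gcongr; exact hf.lipschitz.dist_iterate_le_mul x n

/-- If an isometry `f` admits a point `p` with `dist p (f^[n] p) = n * d` for all `n`,
then every point is displaced by at least `d`. -/
theorem stmt_1 {X : Type*} [MetricSpace X] (f : X → X) (hf : Isometry f)
    (d : ℝ) (hd : 0 ≤ d) (p : X) (hp : ∀ n : ℕ, dist p (f^[n] p) = n * d) :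
    ∀ x : X, d ≤ dist x (f x) :=
  stmt_1_general f hf d p hp
end

section
/- Consider ℓ²(ℤ) with the Hilbert space metric, the shift operator σ defined on the standard orthonormal basis by σ(e_k) = e_{k+1}, and the affine isometry f : ℓ²(ℤ) → ℓ²(ℤ) given by f(u) = e_0 + σ(u). Then f has no fixed point, and inf_{u ∈ ℓ²(ℤ)} ‖f(u) − u‖ = 0. -/
/-!
A fixed point `u` of `u ↦ e₀ + σ u` satisfies `u k = u (k - 1)` for `k ≠ 0` and
`u 0 = 1 + u (-1)`, so `u` is constant on both half-lines `k ≥ 0` and `k ≤ -1`; square-summability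
forces both constants to vanish, contradicting the jump of `1` at `0`.

For the infimum, let `T` be linear with `Tⁿ x` orthonormal and `Sⱼ = ∑_{i<j} Tⁱ x`. Since
`(T - 1) Sⱼ = Tʲ x - x`, the average `u` of `S₁, …, Sₖ` has `x + T u - u = k⁻¹ ∑_{j=1}^k Tʲ x`,
of norm `1 / √k`.
-/

open scoped ENNReal lp

open Finset Filter

theorem Orthonormal.norm_sum_eq_sqrt_card {ι E : Type*} [NormedAddCommGroup E]
    [InnerProductSpace ℝ E] {v : ι → E} (hv : Orthonormal ℝ v) (s : Finset ι) :
    ‖∑ i ∈ s, v i‖ = √(#s : ℝ) := by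
  have h := hv.inner_sum (fun _ => 1) (fun _ => 1) s
  simp only [one_smul, conj_trivial, mul_one, sum_const, nsmul_eq_mul] at h
  rw [← Real.sqrt_sq (norm_nonneg _), ← real_inner_self_eq_norm_sq, h]

section CesaroAverage

variable {E : Type*} [NormedAddCommGroup E] [InnerProductSpace ℝ E]

-- For the shift and `x = e₀` this is the paper's witness `∑_{n<k} (1 - n/k) eₙ`.
noncomputable def cesaroGeomSum (T : Module.End ℝ E) (x : E) (k : ℕ) : E :=
  (k : ℝ)⁻¹ • ∑ j ∈ range k, (∑ i ∈ range (j + 1), T ^ i) x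

theorem add_apply_cesaroGeomSum_sub (T : Module.End ℝ E) (x : E) {k : ℕ} (hk : k ≠ 0) :
    x + T (cesaroGeomSum T x k) - cesaroGeomSum T x k
      = (k : ℝ)⁻¹ • ∑ j ∈ range k, (T ^ (j + 1)) x := by
  have hgeom (j : ℕ) : (T - 1) ((∑ i ∈ range (j + 1), T ^ i) x) = (T ^ (j + 1)) x - x := by
    rw [← Module.End.mul_apply, mul_geom_sum, LinearMap.sub_apply, Module.End.one_apply]
  have hk' : (k : ℝ) ≠ 0 := Nat.cast_ne_zero.mpr hk
  calc x + T (cesaroGeomSum T x k) - cesaroGeomSum T x k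
      = x + (T - 1) (cesaroGeomSum T x k) := by
        rw [LinearMap.sub_apply, Module.End.one_apply, add_sub_assoc]
    _ = x + (k : ℝ)⁻¹ • (∑ j ∈ range k, (T ^ (j + 1)) x - (k : ℝ) • x) := by
        simp only [cesaroGeomSum, map_smul, map_sum, hgeom, sum_sub_distrib, sum_const,
          card_range, Nat.cast_smul_eq_nsmul]
    _ = (k : ℝ)⁻¹ • ∑ j ∈ range k, (T ^ (j + 1)) x := by
        rw [smul_sub, smul_smul, inv_mul_cancel₀ hk', one_smul, add_sub_cancel]

theorem norm_add_apply_cesaroGeomSum_sub (T : Module.End ℝ E) (x : E)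
    (hT : Orthonormal ℝ fun n : ℕ => (T ^ n) x) {k : ℕ} (hk : k ≠ 0) :
    ‖x + T (cesaroGeomSum T x k) - cesaroGeomSum T x k‖ = (√k)⁻¹ := by
  have hsum : ‖∑ j ∈ range k, (T ^ (j + 1)) x‖ = √k := by
    simpa using (hT.comp _ (add_left_injective 1)).norm_sum_eq_sqrt_card (range k)
  rw [add_apply_cesaroGeomSum_sub T x hk, norm_smul, hsum, norm_inv,
    Real.norm_natCast]
  field_simp
  exact Real.sq_sqrt (Nat.cast_nonneg k)

theorem iInf_norm_add_apply_sub_eq_zero (T : Module.End ℝ E) (x : E)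
    (hT : Orthonormal ℝ fun n : ℕ => (T ^ n) x) :
    ⨅ u, ‖x + T u - u‖ = 0 := by
  have hbdd : BddBelow (Set.range fun u => ‖x + T u - u‖) :=
    ⟨0, Set.forall_mem_range.mpr fun _ => norm_nonneg _⟩
  refine le_antisymm ?_ (le_ciInf fun _ => norm_nonneg _)
  refine ge_of_tendsto (tendsto_inv_atTop_zero.comp
    (Real.tendsto_sqrt_atTop.comp tendsto_natCast_atTop_atTop)) ?_
  filter_upwards [eventually_ne_atTop 0] with k hk
  exact (ciInf_le hbdd _).trans_eq (norm_add_apply_cesaroGeomSum_sub T x hT hk)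

end CesaroAverage

theorem lp.eq_zero_of_forall_mem_apply_eq {ι E : Type*} [NormedAddCommGroup E] {p : ℝ≥0∞}
    (hp : 0 < p.toReal) (u : lp (fun _ : ι => E) p) {s : Set ι} (hs : s.Infinite) {c : E}
    (h : ∀ i ∈ s, u i = c) : c = 0 := by
  have hsum : Summable fun _ : s => ‖c‖ ^ p.toReal :=
    ((lp.memℓp u).summable hp).subtype s |>.congr fun i => by simp [h _ i.2]
  have : Infinite s := hs.to_subtype
  rw [summable_const_iff, Real.rpow_eq_zero (norm_nonneg c) hp.ne'] at hsum
  exact norm_eq_zero.mp hsum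

theorem lp.orthonormal_single {ι 𝕜 : Type*} [RCLike 𝕜] [DecidableEq ι] :
    Orthonormal 𝕜 fun i : ι => lp.single 2 i (1 : 𝕜) := by
  rw [orthonormal_iff_ite]
  intro i j
  rw [lp.inner_single_left, lp.single_apply]
  split_ifs <;> simp_all

theorem apply_eq_apply_sub_one_of_map_single (σ : ℓ²(ℤ, ℝ) ≃ₗᵢ[ℝ] ℓ²(ℤ, ℝ))
    (hσ : ∀ k : ℤ, σ (lp.single 2 k 1) = lp.single 2 (k + 1) 1) (u : ℓ²(ℤ, ℝ)) (k : ℤ) :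
    σ u k = u (k - 1) := by
  have h := σ.inner_map_map (lp.single 2 (k - 1) 1) u
  rw [hσ, sub_add_cancel, lp.inner_single_left, lp.inner_single_left] at h
  simpa using h

theorem single_zero_add_ne_self {σ : ℓ²(ℤ, ℝ) → ℓ²(ℤ, ℝ)} (hσ : ∀ u k, σ u k = u (k - 1))
    (u : ℓ²(ℤ, ℝ)) : lp.single 2 0 1 + σ u ≠ u := by
  intro hu
  have hcoord (k : ℤ) : (if k = 0 then 1 else 0) + u (k - 1) = u k := by
    conv_rhs => rw [← hu]
    simp [lp.single_apply, Pi.single_apply, hσ]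
  have hstep {k : ℤ} (hk : k ≠ 0) : u k = u (k - 1) := by simpa [hk] using (hcoord k).symm
  have hpos : ∀ k ∈ Set.Ici (0 : ℤ), u k = u 0 := fun k hk =>
    Int.leInduction rfl
      (fun n hn ih => by rw [hstep (k := n + 1) (by omega), add_sub_cancel_right, ih]) k hk
  have hneg : ∀ k ∈ Set.Iic (-1 : ℤ), u k = u (-1) := fun k hk =>
    Int.leInductionDown rfl (fun n hn ih => by rw [← ih, hstep (k := n) (by omega)]) k hk
  have h0 : u 0 = 0 :=
    lp.eq_zero_of_forall_mem_apply_eq (by norm_num) u (Set.Ici_infinite 0) hpos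
  have h1 : u (-1) = 0 :=
    lp.eq_zero_of_forall_mem_apply_eq (by norm_num) u (Set.Iic_infinite (-1)) hneg
  simpa [h0, h1] using hcoord 0

theorem pow_apply_single_zero (σ : ℓ²(ℤ, ℝ) ≃ₗᵢ[ℝ] ℓ²(ℤ, ℝ))
    (hσ : ∀ k : ℤ, σ (lp.single 2 k 1) = lp.single 2 (k + 1) 1) (n : ℕ) :
    ((σ.toLinearMap : Module.End ℝ ℓ²(ℤ, ℝ)) ^ n) (lp.single 2 0 1)
      = lp.single 2 (n : ℤ) (1 : ℝ) := by
  induction n with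
  | zero => simp
  | succ n ih => rw [pow_succ', Module.End.mul_apply, ih]; push_cast; exact hσ n

/-- On `ℓ²(ℤ)`, if `σ` is the shift isometry (`σ e_k = e_{k+1}`), then the affine
isometry `f u = e₀ + σ u` has no fixed point, while its displacement infimum is `0`
(`f` is parabolic). -/
theorem stmt_12 (σ : lp (fun _ : ℤ => ℝ) 2 ≃ₗᵢ[ℝ] lp (fun _ : ℤ => ℝ) 2)
    (hσ : ∀ k : ℤ, σ (lp.single 2 k (1 : ℝ)) = lp.single 2 (k + 1) (1 : ℝ)) :
    (∀ u : lp (fun _ : ℤ => ℝ) 2, lp.single 2 (0 : ℤ) (1 : ℝ) + σ u ≠ u) ∧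
    (⨅ u : lp (fun _ : ℤ => ℝ) 2, ‖lp.single 2 (0 : ℤ) (1 : ℝ) + σ u - u‖) = 0 := by
  refine ⟨single_zero_add_ne_self (apply_eq_apply_sub_one_of_map_single σ hσ), ?_⟩
  have horth : Orthonormal ℝ fun n : ℕ =>
      ((σ.toLinearMap : Module.End ℝ ℓ²(ℤ, ℝ)) ^ n) (lp.single 2 0 1) := by
    simpa only [pow_apply_single_zero σ hσ, Function.comp_def] using
      lp.orthonormal_single.comp _ Nat.cast_injective
  exact iInf_norm_add_apply_sub_eq_zero _ _ horth
end
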